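/- arXiv:1212.6122 — 7 statements merged into one kernel-verified Lean document; each statement's English description precedes it below -/
import Mathlib

section
/- Every Alster space has the Hurewicz property. -/
open Set Filter

/-- Alster space: every cover by Gδ sets such that each compact subset is contained
in some member, has a countable subcover. -/
def Alster (X : Type*) [TopologicalSpace X] : Prop :=
  ∀ U : Set (Set X), (∀ u ∈ U, IsGδ u) →
    (∀ K : Set X, IsCompact K → ∃ u ∈ U, K ⊆ u) →
    ∃ V ⊆ U, V.Countable ∧ ⋃₀ V = univ

/-- The Hurewicz property. -/
def Hurewicz (X : Type*) [TopologicalSpace X] : Prop :=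
  ∀ U : ℕ → Set (Set X),
    (∀ n, (∀ u ∈ U n, IsOpen u) ∧ ⋃₀ U n = univ) →
    ∃ V : ℕ → Set (Set X), (∀ n, V n ⊆ U n ∧ (V n).Finite) ∧
      ∀ x : X, ∀ᶠ n in atTop, x ∈ ⋃₀ V n

theorem alster_hurewicz (X : Type*) [TopologicalSpace X] (h : Alster X) :
    Hurewicz X := by
  classical
  intro U hU
  -- For each compact K and each n, choose a finite subfamily of U n covering K.
  have key : ∀ K : Set X, IsCompact K → ∀ n : ℕ,
      ∃ W : Set (Set X), W ⊆ U n ∧ W.Finite ∧ K ⊆ ⋃₀ W := by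
    intro K hK n
    obtain ⟨W, hWU, hWfin, hW⟩ := hK.elim_finite_subcover_image
      (b := U n) (c := id) (fun u hu => (hU n).1 u hu)
      (by simp only [id_eq, ← sUnion_eq_biUnion, (hU n).2]; exact subset_univ K)
    exact ⟨W, hWU, hWfin, by simpa only [id_eq, ← sUnion_eq_biUnion] using hW⟩
  choose W hWU hWfin hWcov using key
  set G : (K : Set X) → IsCompact K → Set X :=
    fun K hK => ⋂ n, ⋃₀ W K hK n with hG
  set C : Set (Set X) := {s | ∃ K, ∃ hK : IsCompact K, s = G K hK} with hC
  have hGδ : ∀ u ∈ C, IsGδ u := by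
    rintro u ⟨K, hK, rfl⟩
    exact IsGδ.iInter_of_isOpen fun n =>
      isOpen_sUnion fun t ht => (hU n).1 t (hWU K hK n ht)
  have hcomp : ∀ K : Set X, IsCompact K → ∃ u ∈ C, K ⊆ u := by
    intro K hK
    exact ⟨G K hK, ⟨K, hK, rfl⟩, subset_iInter fun n => hWcov K hK n⟩
  obtain ⟨V, hVC, hVcnt, hVuniv⟩ := h C hGδ hcomp
  rcases V.eq_empty_or_nonempty with rfl | hVne
  · refine ⟨fun _ => ∅, fun n => ⟨empty_subset _, finite_empty⟩, fun x => ?_⟩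
    have : x ∈ (∅ : Set X) := by
      rw [← sUnion_empty]; rw [hVuniv]; exact mem_univ x
    exact this.elim
  · obtain ⟨f, hf⟩ := hVcnt.exists_eq_range hVne
    have hfm : ∀ m, ∃ K, ∃ hK : IsCompact K, f m = G K hK := by
      intro m
      exact hVC (hf ▸ mem_range_self m)
    choose Ks hKs hfG using hfm
    refine ⟨fun n => ⋃ m ∈ Finset.range (n + 1), W (Ks m) (hKs m) n,
      fun n => ⟨?_, ?_⟩, fun x => ?_⟩
    · intro t ht
      simp only [mem_iUnion] at ht
      obtain ⟨m, _, htm⟩ := ht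
      exact hWU _ _ n htm
    · exact Set.Finite.biUnion (Finset.range (n + 1)).finite_toSet
        fun m _ => hWfin _ _ n
    · have hx : x ∈ ⋃₀ V := hVuniv ▸ mem_univ x
      rw [hf] at hx
      obtain ⟨s, ⟨m, rfl⟩, hxs⟩ := hx
      rw [hfG m] at hxs
      filter_upwards [eventually_ge_atTop m] with n hn
      have hxn : x ∈ ⋃₀ W (Ks m) (hKs m) n := by
        exact mem_iInter.1 hxs n
      obtain ⟨t, ht, hxt⟩ := hxn
      exact ⟨t, mem_iUnion.2 ⟨m, mem_iUnion.2
        ⟨Finset.mem_range.2 (Nat.lt_succ_of_le hn), ht⟩⟩, hxt⟩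
end

section
/- If X satisfies S_1(G_K, G_Gamma), then X is productively Hurewicz: for every Hurewicz space Y, the product X × Y is Hurewicz. -/
open Set Filter

def GKCover (X : Type*) [TopologicalSpace X] (U : Set (Set X)) : Prop :=
  (∀ u ∈ U, IsGδ u) ∧ ∀ K : Set X, IsCompact K → ∃ u ∈ U, K ⊆ u

def S1GKGGamma (X : Type*) [TopologicalSpace X] : Prop :=
  ∀ U : ℕ → Set (Set X), (∀ n, GKCover X (U n)) →
    ∃ f : ℕ → Set X, (∀ n, f n ∈ U n) ∧ ∀ x : X, ∀ᶠ n in atTop, x ∈ f n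

theorem S1GKGGamma_productively_hurewicz (X : Type*) [TopologicalSpace X]
    (h : S1GKGGamma X) :
    ∀ (Y : Type*) [TopologicalSpace Y], Hurewicz Y → Hurewicz (X × Y) := by
  classical
  intro Y _ hY O hO
  -- the family of Gδ sets carrying finite selections eventually covering G × Y
  set 𝒢 : Set (Set X) := { G | IsGδ G ∧ ∃ F : ℕ → Set (Set (X × Y)),
      (∀ m, F m ⊆ O m ∧ (F m).Finite) ∧
      ∀ x ∈ G, ∀ y : Y, ∀ᶠ m in atTop, (x, y) ∈ ⋃₀ F m } with h𝒢
  have hGK : GKCover X 𝒢 := by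
    constructor
    · rintro u ⟨hu, -⟩; exact hu
    · intro K hK
      -- build open covers of Y via the tube lemma
      have hcov : ∀ m : ℕ, ∀ y : Y, ∃ V : Set Y,
          (IsOpen V ∧ ∃ U F, IsOpen U ∧ K ⊆ U ∧ F ⊆ O m ∧ F.Finite ∧
            U ×ˢ V ⊆ ⋃₀ F) ∧ y ∈ V := by
        intro m y
        have hKy : IsCompact (K ×ˢ ({y} : Set Y)) := hK.prod isCompact_singleton
        have hsub : K ×ˢ ({y} : Set Y) ⊆ ⋃ u ∈ O m, u := by
          rw [← sUnion_eq_biUnion, (hO m).2]; exact subset_univ _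
        obtain ⟨F, hFO, hFfin, hFc⟩ :=
          hKy.elim_finite_subcover_image (fun u hu => (hO m).1 u hu) hsub
        have hFopen : IsOpen (⋃ u ∈ F, u) :=
          isOpen_biUnion fun u hu => (hO m).1 u (hFO hu)
        obtain ⟨U, V, hUo, hVo, hKU, hyV, hUV⟩ :=
          generalized_tube_lemma hK isCompact_singleton hFopen hFc
        refine ⟨V, ⟨hVo, U, F, hUo, hKU, hFO, hFfin, ?_⟩, hyV rfl⟩
        rw [sUnion_eq_biUnion]; exact hUV
      set 𝒱 : ℕ → Set (Set Y) := fun m => { V | IsOpen V ∧ ∃ U F, IsOpen U ∧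
          K ⊆ U ∧ F ⊆ O m ∧ F.Finite ∧ U ×ˢ V ⊆ ⋃₀ F } with h𝒱
      obtain ⟨W, hW1, hW2⟩ := hY 𝒱 (by
        intro m
        refine ⟨fun V hV => hV.1, eq_univ_of_forall fun y => ?_⟩
        obtain ⟨V, hV, hyV⟩ := hcov m y
        exact ⟨V, hV, hyV⟩)
      have hpick : ∀ m, ∀ V ∈ W m, ∃ U F, IsOpen U ∧ K ⊆ U ∧ F ⊆ O m ∧
          F.Finite ∧ U ×ˢ V ⊆ ⋃₀ F := fun m V hV => ((hW1 m).1 hV).2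
      choose! Uof Fof hUopen hKU hFO hFfin hUV using hpick
      refine ⟨⋂ m, ⋂ V ∈ W m, Uof m V, ⟨?_, fun m => ⋃ V ∈ W m, Fof m V, ?_, ?_⟩, ?_⟩
      · exact .iInter_of_isOpen fun m =>
          (hW1 m).2.isOpen_biInter fun V hV => hUopen m V hV
      · intro m
        refine ⟨iUnion₂_subset fun V hV => hFO m V hV,
          (hW1 m).2.biUnion fun V hV => hFfin m V hV⟩
      · intro x hx y
        refine (hW2 y).mono fun m hm => ?_
        obtain ⟨V, hVW, hyV⟩ := hm
        have hxU : x ∈ Uof m V := mem_iInter₂.1 (mem_iInter.1 hx m) V hVW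
        have : (x, y) ∈ ⋃₀ Fof m V := hUV m V hVW ⟨hxU, hyV⟩
        exact sUnion_subset_sUnion (subset_biUnion_of_mem hVW) this
      · exact subset_iInter fun m => subset_iInter₂ fun V hV => hKU m V hV
  obtain ⟨f, hf𝒢, hfx⟩ := h (fun _ => 𝒢) fun _ => hGK
  have hw : ∀ n, ∃ F : ℕ → Set (Set (X × Y)),
      (∀ m, F m ⊆ O m ∧ (F m).Finite) ∧
      ∀ x ∈ f n, ∀ y : Y, ∀ᶠ m in atTop, (x, y) ∈ ⋃₀ F m := fun n => (hf𝒢 n).2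
  choose Fn hFn1 hFn2 using hw
  refine ⟨fun m => ⋃ n ∈ Set.Iic m, Fn n m, fun m =>
    ⟨iUnion₂_subset fun n _ => (hFn1 n m).1,
      (Set.finite_Iic m).biUnion fun n _ => (hFn1 n m).2⟩, fun p => ?_⟩
  obtain ⟨n, hn⟩ := (hfx p.1).exists
  have h1 := hFn2 n p.1 hn p.2
  filter_upwards [h1, eventually_ge_atTop n] with m hm hnm
  exact sUnion_subset_sUnion
    (subset_biUnion_of_mem (u := fun n => Fn n m) (mem_Iic.2 hnm)) hm
end

section
/- If X satisfies S_1(G_K, G_Gamma), then X is productively Menger: for every Menger space Y, the product X × Y is Menger. -/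
open Set Filter

/-- The Menger property S_fin(O,O). -/
def Menger (X : Type*) [TopologicalSpace X] : Prop :=
  ∀ U : ℕ → Set (Set X),
    (∀ n, (∀ u ∈ U n, IsOpen u) ∧ ⋃₀ U n = univ) →
    ∃ V : ℕ → Set (Set X), (∀ n, V n ⊆ U n ∧ (V n).Finite) ∧
      (⋃ n, ⋃₀ V n) = univ

lemma mengerIdx {Y : Type*} [TopologicalSpace Y] (hY : Menger Y)
    {ι : Type*} [Nonempty ι] (V : ℕ → ι → Set Y)
    (hop : ∀ n i, IsOpen (V n i)) (hcov : ∀ n, (⋃ i, V n i) = univ) :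
    ∃ g : ℕ → Finset ι, ∀ y, ∃ n, ∃ i ∈ g n, y ∈ V n i := by
  classical
  obtain ⟨G, hG1, hG2⟩ := hY (fun n => range (V n)) (by
    intro n
    constructor
    · rintro u ⟨i, rfl⟩; exact hop n i
    · rw [sUnion_range]; exact hcov n)
  set pick : ℕ → Set Y → ι := fun n v =>
    if h : ∃ i, V n i = v then h.choose else Classical.arbitrary ι with hpick
  refine ⟨fun n => ((hG1 n).2.toFinset).image (pick n), ?_⟩
  intro y
  have : y ∈ ⋃ n, ⋃₀ G n := hG2 ▸ mem_univ y
  obtain ⟨n, hn⟩ := mem_iUnion.mp this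
  obtain ⟨v, hvG, hyv⟩ := hn
  have hvr : ∃ i, V n i = v := (hG1 n).1 hvG
  refine ⟨n, pick n v, Finset.mem_image.mpr ⟨v, (hG1 n).2.mem_toFinset.mpr hvG, rfl⟩, ?_⟩
  have : V n (pick n v) = v := by
    rw [hpick]; simp only [dif_pos hvr]; exact hvr.choose_spec
  rw [this]; exact hyv

theorem S1GKGGamma_productively_menger (X : Type*) [TopologicalSpace X]
    (h : S1GKGGamma X) :
    ∀ (Y : Type*) [TopologicalSpace Y], Menger Y → Menger (X × Y) := by
  classical
  intro Y _ hY W hW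
  by_cases hne : Nonempty (X × Y)
  swap
  · refine ⟨fun _ => ∅, fun n => ⟨empty_subset _, finite_empty⟩, ?_⟩
    have he : IsEmpty (X × Y) := not_nonempty_iff.mp hne
    exact eq_univ_of_forall fun p => (he.false p).elim
  obtain ⟨x₀, y₀⟩ := hne
  haveI : Nonempty X := ⟨x₀⟩
  haveI : Nonempty Y := ⟨y₀⟩
  -- the Gδ covers
  set 𝒰 : ℕ → Set (Set X) := fun n =>
    { u | ∃ (A : ℕ → Set X) (B : ℕ → Set Y) (w : ℕ → Set (X × Y)) (S : Y → Finset ℕ),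
        (∀ i, IsOpen (A i)) ∧ (∀ i, IsOpen (B i)) ∧ (∀ i, w i ∈ W n) ∧ (∀ i, A i ×ˢ B i ⊆ w i) ∧
        (∀ y, ∀ i ∈ S y, y ∈ B i) ∧ u = ⋂ y, ⋃ i ∈ S y, A i } with h𝒰
  have hGK : ∀ n, GKCover X (𝒰 n) := by
    intro n
    constructor
    · rintro u ⟨A, B, w, S, hA, -, -, -, -, rfl⟩
      have heq : (⋂ y, ⋃ i ∈ S y, A i) = ⋂ T ∈ range S, ⋃ i ∈ T, A i :=
        (biInter_range (f := S) (g := fun T => ⋃ i ∈ T, A i)).symm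
      rw [heq]
      exact IsGδ.biInter (to_countable _)
        (fun T _ => (isOpen_biUnion fun i _ => hA i).isGδ)
    · intro K hK
      obtain ⟨w₀, hw₀⟩ : ∃ w₀, w₀ ∈ W n := by
        have : (x₀, y₀) ∈ ⋃₀ W n := (hW n).2 ▸ mem_univ _
        obtain ⟨w₀, hw₀, -⟩ := this; exact ⟨w₀, hw₀⟩
      rcases K.eq_empty_or_nonempty with hKe | hKne
      · refine ⟨⋂ _ : Y, ⋃ i ∈ (∅ : Finset ℕ), (∅ : Set X),
          ⟨fun _ => ∅, fun _ => ∅, fun _ => w₀, fun _ => ∅,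
            fun _ => isOpen_empty, fun _ => isOpen_empty, fun _ => hw₀, fun _ => by simp, fun _ i hi => by simp at hi,
            rfl⟩, ?_⟩
        rw [hKe]; exact empty_subset _
      -- main case
      have hstep : ∀ y : Y, ∃ T : Finset (Set X), (K ⊆ ⋃₀ ↑T) ∧
          ∀ A ∈ T, IsOpen A ∧ ∃ B v, IsOpen B ∧ y ∈ B ∧ v ∈ W n ∧ A ×ˢ B ⊆ v := by
        intro y
        set 𝒜 : Set (Set X) :=
          { A | IsOpen A ∧ ∃ B v, IsOpen B ∧ y ∈ B ∧ v ∈ W n ∧ A ×ˢ B ⊆ v } with h𝒜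
        have hcov : K ⊆ ⋃ A ∈ 𝒜, A := by
          intro x hx
          have : (x, y) ∈ ⋃₀ W n := (hW n).2 ▸ mem_univ _
          obtain ⟨v, hv, hxv⟩ := this
          obtain ⟨A, B, hAo, hBo, hxA, hyB, hAB⟩ :=
            isOpen_prod_iff.mp ((hW n).1 v hv) x y hxv
          exact mem_biUnion ⟨hAo, B, v, hBo, hyB, hv, hAB⟩ hxA
        obtain ⟨b', hb'sub, hb'fin, hb'cov⟩ :=
          hK.elim_finite_subcover_image (fun A hA => hA.1) hcov
        refine ⟨hb'fin.toFinset, ?_, ?_⟩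
        · rw [Set.Finite.coe_toFinset, sUnion_eq_biUnion]; exact hb'cov
        · intro A hA
          exact hb'sub (hb'fin.mem_toFinset.mp hA)
      choose T hT1 hT2 using hstep
      have hstep2 : ∀ (y : Y) (A : Set X), ∃ B v,
          A ∈ T y → (IsOpen B ∧ y ∈ B ∧ v ∈ W n ∧ A ×ˢ B ⊆ v) := by
        intro y A
        by_cases hA : A ∈ T y
        · obtain ⟨-, B, v, hp⟩ := hT2 y A hA; exact ⟨B, v, fun _ => hp⟩
        · exact ⟨∅, ∅, fun hc => absurd hc hA⟩
      choose Bf wf hBw using hstep2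
      set V : Y → Set Y := fun z => ⋂ A ∈ T z, Bf z A with hV
      have hVopen : ∀ z, IsOpen (V z) :=
        fun z => isOpen_biInter_finset (fun A hA => (hBw z A hA).1)
      have hVmem : ∀ z, z ∈ V z :=
        fun z => mem_iInter₂.mpr fun A hA => (hBw z A hA).2.1
      obtain ⟨g, hg⟩ := mengerIdx hY (fun _ => V) (fun _ z => hVopen z)
        (fun _ => eq_univ_of_forall fun z => mem_iUnion.mpr ⟨z, hVmem z⟩)
      choose ky zy hzy hyV using hg
      set D : Set (ℕ × Y × Set X) := {d | d.2.1 ∈ g d.1 ∧ d.2.2 ∈ T d.2.1} with hD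
      have hDc : D.Countable := by
        have hsub : D ⊆ ⋃ (k : ℕ), ⋃ z ∈ g k, (fun A => (k, z, A)) '' ↑(T z) := by
          rintro ⟨k, z, A⟩ ⟨h1, h2⟩
          exact mem_iUnion.mpr ⟨k, mem_iUnion₂.mpr ⟨z, h1, mem_image_of_mem _ h2⟩⟩
        refine Set.Countable.mono hsub ?_
        refine countable_iUnion fun k => ?_
        refine Set.Countable.biUnion ((g k).countable_toSet) fun z _ => ?_
        exact ((T z).finite_toSet.image _).countable
      have hDne : D.Nonempty := by
        obtain ⟨x, hx⟩ := hKne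
        have hco := hT1 (zy y₀)
        obtain ⟨A, hA, -⟩ := hco hx
        exact ⟨(ky y₀, zy y₀, A), hzy y₀, hA⟩
      obtain ⟨e, he⟩ := hDc.exists_eq_range hDne
      have heD : ∀ i, e i ∈ D := fun i => he ▸ mem_range_self i
      have hidx : ∀ d ∈ D, ∃ i, e i = d := by
        intro d hd; rw [he] at hd; exact hd
      choose! idxf hidxf using hidx
      set S : Y → Finset ℕ :=
        fun y => (T (zy y)).image (fun A => idxf (ky y, zy y, A)) with hS
      refine ⟨⋂ y, ⋃ i ∈ S y, (e i).2.2,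
        ⟨fun i => (e i).2.2, fun i => Bf (e i).2.1 (e i).2.2,
         fun i => wf (e i).2.1 (e i).2.2, S,
         fun i => (hT2 (e i).2.1 (e i).2.2 (heD i).2).1,
         fun i => (hBw (e i).2.1 (e i).2.2 (heD i).2).1,
         fun i => (hBw (e i).2.1 (e i).2.2 (heD i).2).2.2.1,
         fun i => (hBw (e i).2.1 (e i).2.2 (heD i).2).2.2.2,
         ?_, rfl⟩, ?_⟩
      · -- ∀ y, ∀ i ∈ S y, y ∈ Bf (e i).2.1 (e i).2.2
        intro y i hi
        obtain ⟨A, hA, rfl⟩ := Finset.mem_image.mp hi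
        have hdD : (ky y, zy y, A) ∈ D := ⟨hzy y, hA⟩
        show y ∈ Bf (e (idxf (ky y, zy y, A))).2.1 (e (idxf (ky y, zy y, A))).2.2
        rw [hidxf _ hdD]
        exact mem_iInter₂.mp (hyV y) A hA
      · -- K ⊆ u
        intro x hx
        refine mem_iInter.mpr fun y => ?_
        obtain ⟨A, hA, hxA⟩ := hT1 (zy y) hx
        have hdD : (ky y, zy y, A) ∈ D := ⟨hzy y, hA⟩
        refine mem_biUnion (Finset.mem_image.mpr ⟨A, hA, rfl⟩) ?_
        show x ∈ (e (idxf (ky y, zy y, A))).2.2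
        rw [hidxf _ hdD]
        exact hxA
  -- apply S1
  obtain ⟨u, hu, hux⟩ := h 𝒰 hGK
  simp only [h𝒰, mem_setOf_eq] at hu
  choose 𝔸 𝔹 𝔴 S hAo hBo hwW hbox hSB hueq using hu
  set V' : ℕ → Y → Set Y := fun n y => ⋂ i ∈ S n y, 𝔹 n i with hV'
  have hV'open : ∀ n y, IsOpen (V' n y) :=
    fun n y => isOpen_biInter_finset fun i _ => hBo n i
  have hV'mem : ∀ n y, y ∈ V' n y :=
    fun n y => mem_iInter₂.mpr fun i hi => hSB n y i hi
  have hMk : ∀ k : ℕ, ∃ g : ℕ → Finset Y, ∀ y, ∃ m, ∃ z ∈ g m, y ∈ V' (k + m) z :=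
    fun k => mengerIdx hY (fun m => V' (k + m)) (fun m z => hV'open (k + m) z)
      (fun m => eq_univ_of_forall fun z => mem_iUnion.mpr ⟨z, hV'mem (k + m) z⟩)
  choose G hG using hMk
  refine ⟨fun n => ⋃ (k : ℕ) (_ : k ≤ n), ⋃ z ∈ G k (n - k), 𝔴 n '' ↑(S n z), fun n => ⟨?_, ?_⟩, ?_⟩
  · rintro v hv
    simp only [mem_iUnion, mem_image, Finset.mem_coe] at hv
    obtain ⟨k, -, z, -, i, -, rfl⟩ := hv
    exact hwW n i
  · refine Set.Finite.biUnion (finite_Iic n) fun k _ => ?_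
    refine Set.Finite.biUnion (G k (n - k)).finite_toSet fun z _ => ?_
    exact (S n z).finite_toSet.image _
  · refine eq_univ_of_forall ?_
    rintro ⟨x, y⟩
    obtain ⟨N, hN⟩ := eventually_atTop.mp (hux x)
    obtain ⟨m, z, hzG, hyV⟩ := hG N y
    set n := N + m with hn
    have hxu : x ∈ u n := hN n (Nat.le_add_right N m)
    rw [hueq n] at hxu
    have hxz := mem_iInter.mp hxu z
    obtain ⟨i, hiS, hxA⟩ := mem_iUnion₂.mp hxz
    have hyB : y ∈ 𝔹 n i := mem_iInter₂.mp hyV i hiS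
    refine mem_iUnion.mpr ⟨n, ?_⟩
    refine ⟨𝔴 n i, ?_, hbox n i (mk_mem_prod hxA hyB)⟩
    refine mem_iUnion₂.mpr ⟨N, Nat.le_add_right N m, ?_⟩
    refine mem_iUnion₂.mpr ⟨z, ?_, mem_image_of_mem _ hiS⟩
    simpa [hn, Nat.add_sub_cancel_left] using hzG
end

section
/- If X is a Rothberger space satisfying S_1(G_K, G_Gamma), then X is productively Rothberger: for every Rothberger space Y, the product X × Y is Rothberger. -/
open Set Filter

/-- The Rothberger property S₁(O,O). -/
def Rothberger (X : Type*) [TopologicalSpace X] : Prop :=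
  ∀ U : ℕ → Set (Set X),
    (∀ n, (∀ u ∈ U n, IsOpen u) ∧ ⋃₀ U n = univ) →
    ∃ f : ℕ → Set X, (∀ n, f n ∈ U n) ∧ (⋃ n, f n) = univ

section Aux

variable {X Y : Type*}

/-- Data for row `(k,i)` : `W` is a finite union of `A l`'s (`l ∈ E`), where for each `l ∈ E`
there is a box `A l ×ˢ B l` contained in a member `u l` of the cover `U (e.symm (k,i,l))`,
and `V ⊆ B l` for all `l ∈ E`. -/
def RowData (U : ℕ → Set (Set (X × Y))) (e : ℕ ≃ ℕ × ℕ × ℕ) (k i : ℕ)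
    (W : Set X) (V : Set Y) : Prop :=
  ∃ (E : Finset ℕ) (A : ℕ → Set X) (B : ℕ → Set Y) (u : ℕ → Set (X × Y)),
    W = ⋃ l ∈ E, A l ∧
    ∀ l ∈ E, V ⊆ B l ∧ u l ∈ U (e.symm (k, i, l)) ∧ A l ×ˢ B l ⊆ u l

/-- The Gδ family used for the `S1(G_K, G_Γ)` selection. -/
def GFam [TopologicalSpace X] (U : ℕ → Set (Set (X × Y))) (e : ℕ ≃ ℕ × ℕ × ℕ) (k : ℕ) :
    Set (Set X) :=
  { G | ∃ (W : ℕ → Set X) (V : ℕ → Set Y),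
      G = ⋂ i, W i ∧ (∀ i, IsOpen (W i)) ∧ (⋃ i, V i) = univ ∧
      ∀ i, RowData U e k i (W i) (V i) }

end Aux

theorem rothberger_S1GKGGamma_productively_rothberger (X : Type*)
    [TopologicalSpace X] (hR : Rothberger X) (h : S1GKGGamma X) :
    ∀ (Y : Type*) [TopologicalSpace Y], Rothberger Y → Rothberger (X × Y) := by
  classical
  intro Y _ hRY U hU
  -- X is nonempty (otherwise hR is contradictory)
  by_cases hX : Nonempty X
  swap
  · exfalso
    obtain ⟨f, hf, -⟩ := hR (fun _ => (∅ : Set (Set X)))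
      (fun n => ⟨fun u hu => absurd hu (notMem_empty u), by
        rw [sUnion_empty]
        exact (univ_eq_empty_iff.mpr (not_nonempty_iff.mp hX)).symm⟩)
    exact absurd (hf 0) (notMem_empty _)
  -- Y is nonempty (otherwise hRY is contradictory)
  by_cases hYne : Nonempty Y
  swap
  · exfalso
    obtain ⟨f, hf, -⟩ := hRY (fun _ => (∅ : Set (Set Y)))
      (fun n => ⟨fun u hu => absurd hu (notMem_empty u), by
        rw [sUnion_empty]
        exact (univ_eq_empty_iff.mpr (not_nonempty_iff.mp hYne)).symm⟩)
    exact absurd (hf 0) (notMem_empty _)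
  obtain ⟨x₀⟩ := hX
  obtain ⟨y₀⟩ := hYne
  have hUne : ∀ n, ∃ u, u ∈ U n := by
    intro n
    have hxy : ((x₀, y₀) : X × Y) ∈ ⋃₀ U n := by rw [(hU n).2]; trivial
    obtain ⟨u, hu, -⟩ := hxy
    exact ⟨u, hu⟩
  set e : ℕ ≃ ℕ × ℕ × ℕ := (Denumerable.eqv (ℕ × ℕ × ℕ)).symm with he
  -- slice covers of X
  have slice : ∀ (y : Y) (n : ℕ),
      (∀ A ∈ {A : Set X | IsOpen A ∧ ∃ B : Set Y, IsOpen B ∧ y ∈ B ∧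
        ∃ u ∈ U n, A ×ˢ B ⊆ u}, IsOpen A) ∧
      ⋃₀ {A : Set X | IsOpen A ∧ ∃ B : Set Y, IsOpen B ∧ y ∈ B ∧
        ∃ u ∈ U n, A ×ˢ B ⊆ u} = univ := by
    intro y n
    refine ⟨fun A hA => hA.1, eq_univ_iff_forall.mpr fun x => ?_⟩
    have hxy : ((x, y) : X × Y) ∈ ⋃₀ U n := by rw [(hU n).2]; trivial
    obtain ⟨u, hu, hxyu⟩ := hxy
    obtain ⟨A, B, hA, hB, hxA, hyB, hsub⟩ := isOpen_prod_iff.mp ((hU n).1 u hu) x y hxyu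
    exact ⟨A, ⟨hA, B, hB, hyB, u, hu, hsub⟩, hxA⟩
  -- each GFam is a GK cover
  have hGK : ∀ k : ℕ, GKCover X (GFam U e k) := by
    intro k
    constructor
    · rintro G ⟨W, V, rfl, hWo, -, -⟩
      exact IsGδ.iInter fun i => (hWo i).isGδ
    · intro K hK
      -- for each row i and each y, produce a tube via Rothberger of X
      have key : ∀ (i : ℕ) (y : Y), ∃ (W : Set X) (V' : Set Y),
          IsOpen W ∧ IsOpen V' ∧ y ∈ V' ∧ K ⊆ W ∧ RowData U e k i W V' := by
        intro i y
        obtain ⟨g, hg1, hg2⟩ := hR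
          (fun l => {A : Set X | IsOpen A ∧ ∃ B : Set Y, IsOpen B ∧ y ∈ B ∧
            ∃ u ∈ U (e.symm (k, i, l)), A ×ˢ B ⊆ u})
          (fun l => slice y (e.symm (k, i, l)))
        simp only [mem_setOf_eq] at hg1
        choose hAo B hBo hyB uu huu hsub using hg1
        have hKsub : K ⊆ ⋃ l, g l := hg2 ▸ subset_univ K
        obtain ⟨E, hE⟩ := hK.elim_finite_subcover g hAo hKsub
        refine ⟨⋃ l ∈ E, g l, ⋂ l ∈ E, B l, isOpen_biUnion fun l _ => hAo l,
          isOpen_biInter_finset fun l _ => hBo l, mem_iInter₂.mpr fun l _ => hyB l, hE,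
          E, g, B, uu, rfl, fun l hl => ⟨?_, huu l, hsub l⟩⟩
        exact biInter_subset_of_mem hl
      choose Wf Vf hWo hVo hyV hKW hRow using key
      -- Rothberger of Y across rows
      have hD : ∀ i, (∀ V ∈ range (Vf i), IsOpen V) ∧ ⋃₀ range (Vf i) = univ := by
        intro i
        constructor
        · rintro V ⟨y, rfl⟩
          exact hVo i y
        · exact eq_univ_iff_forall.mpr fun y => ⟨Vf i y, mem_range_self y, hyV i y⟩
      obtain ⟨fV, h1, h2⟩ := hRY (fun i => range (Vf i)) hD
      choose ys hys using fun i => (h1 i : fV i ∈ range (Vf i))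
      refine ⟨⋂ i, Wf i (ys i), ⟨fun i => Wf i (ys i), fun i => Vf i (ys i), rfl,
        fun i => hWo i (ys i), ?_, fun i => hRow i (ys i)⟩,
        subset_iInter fun i => hKW i (ys i)⟩
      rw [iUnion_congr hys]
      exact h2
  -- apply S1(G_K, G_Γ)
  obtain ⟨G, hG1, hG2⟩ := h (fun k => GFam U e k) hGK
  simp only [GFam, mem_setOf_eq] at hG1
  choose W V hGeq hWo hVcov hRow using hG1
  simp only [RowData] at hRow
  choose E A B uu hWeq hmain using hRow
  -- final selection
  refine ⟨fun n => if hl : (e n).2.2 ∈ E (e n).1 (e n).2.1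
      then uu (e n).1 (e n).2.1 (e n).2.2 else (hUne n).choose, ?_, ?_⟩
  · intro n
    rcases hn : e n with ⟨k, i, l⟩
    simp only [hn]
    split_ifs with hl
    · have hu := (hmain k i l hl).2.1
      rwa [← hn, e.symm_apply_apply] at hu
    · exact (hUne n).choose_spec
  · refine eq_univ_iff_forall.mpr fun p => ?_
    obtain ⟨x, y⟩ := p
    obtain ⟨k, hk⟩ := (hG2 x).exists
    rw [hGeq k] at hk
    have hy : y ∈ ⋃ i, V k i := by rw [hVcov k]; trivial
    obtain ⟨i, hyi⟩ := mem_iUnion.mp hy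
    have hx : x ∈ ⋃ l ∈ E k i, A k i l := by
      rw [← hWeq k i]
      exact mem_iInter.mp hk i
    obtain ⟨l, hlE, hxl⟩ := mem_iUnion₂.mp hx
    obtain ⟨hVB, huU, hsub⟩ := hmain k i l hlE
    refine mem_iUnion.mpr ⟨e.symm (k, i, l), ?_⟩
    simp only [Equiv.apply_symm_apply]
    rw [dif_pos hlE]
    exact hsub ⟨hxl, hVB hyi⟩
end

section
/- If a space X has a dense subset satisfying S_1(G_K, G_Gamma), then X satisfies S_1(G_K, G_{D_Gamma}). -/
open Set Filter

/-- S₁(G_K, G_{DΓ}): selections are Gδ sets such that every nonempty open set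
meets all but finitely many of them. -/
def S1GKGDGamma (X : Type*) [TopologicalSpace X] : Prop :=
  ∀ U : ℕ → Set (Set X), (∀ n, GKCover X (U n)) →
    ∃ f : ℕ → Set X, (∀ n, f n ∈ U n) ∧
      ∀ O : Set X, IsOpen O → O.Nonempty → ∀ᶠ n in atTop, (O ∩ f n).Nonempty

lemma isGδ_preimage {X Y : Type*} [TopologicalSpace X] [TopologicalSpace Y]
    {f : X → Y} (hf : Continuous f) {u : Set Y} (hu : IsGδ u) : IsGδ (f ⁻¹' u) := by
  obtain ⟨T, hTo, hTc, rfl⟩ := hu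
  rw [sInter_eq_biInter, preimage_iInter₂]
  exact .biInter hTc fun t ht => (hTo t ht |>.preimage hf).isGδ

theorem dense_S1GKGGamma_S1GKGDGamma (X : Type*) [TopologicalSpace X]
    (D : Set X) (hD : Dense D) (h : S1GKGGamma D) : S1GKGDGamma X := by
  intro U hU
  set V : ℕ → Set (Set D) := fun n => (fun u => ((↑) : D → X) ⁻¹' u) '' U n with hV
  have hVcov : ∀ n, GKCover D (V n) := by
    intro n
    constructor
    · rintro v ⟨u, hu, rfl⟩
      exact isGδ_preimage continuous_subtype_val ((hU n).1 u hu)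
    · intro K hK
      obtain ⟨u, hu, hKu⟩ := (hU n).2 (Subtype.val '' K) (hK.image continuous_subtype_val)
      exact ⟨_, ⟨u, hu, rfl⟩, fun x hx => hKu ⟨x, hx, rfl⟩⟩
  obtain ⟨g, hg, hg'⟩ := h V hVcov
  choose u hu hgu using fun n => hg n
  refine ⟨u, hu, fun O hO hOne => ?_⟩
  obtain ⟨d, hdO, hdD⟩ := hD.inter_open_nonempty O hO hOne
  filter_upwards [hg' ⟨d, hdD⟩] with n hn
  exact ⟨d, hdO, by rw [← hgu n] at hn; exact hn⟩
end

section
/- If X satisfies S_1(G_K, G_{D_Gamma}), then X is productively weakly Menger: for every weakly Menger space Y, X × Y is weakly Menger. -/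
open Set Filter

/-- Weakly Menger: S_fin(O, D). -/
def WeaklyMenger (Z : Type*) [TopologicalSpace Z] : Prop :=
  ∀ U : ℕ → Set (Set Z),
    (∀ n, (∀ u ∈ U n, IsOpen u) ∧ ⋃₀ U n = univ) →
    ∃ V : ℕ → Set (Set Z), (∀ n, V n ⊆ U n ∧ (V n).Finite) ∧
      Dense (⋃ n, ⋃₀ V n)

theorem S1GKGDGamma_productively_weaklyMenger (X : Type*) [TopologicalSpace X]
    (h : S1GKGDGamma X) :
    ∀ (Y : Type*) [TopologicalSpace Y],
      WeaklyMenger Y → WeaklyMenger (X × Y) := by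
  classical
  intro Y _ hY O hO
  set U : ℕ → Set (Set X) := fun n =>
    { u | ∃ (F : ℕ → Set (Set (X × Y))) (V : ℕ → Set Y) (A : ℕ → Set X),
        (∀ m, F m ⊆ O (Nat.pair n m)) ∧ (∀ m, (F m).Finite) ∧
        (∀ m, IsOpen (A m)) ∧ (∀ m, A m ×ˢ V m ⊆ ⋃₀ F m) ∧
        Dense (⋃ m, V m) ∧ u = ⋂ m, A m } with hUdef
  have hGK : ∀ n, GKCover X (U n) := by
    intro n
    constructor
    · rintro u ⟨F, V, A, -, -, hAopen, -, -, rfl⟩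
      exact .iInter fun m => (hAopen m).isGδ
    · intro K hK
      set Vc : ℕ → Set (Set Y) := fun m =>
        { V | IsOpen V ∧ ∃ A, IsOpen A ∧ K ⊆ A ∧
            ∃ F, F ⊆ O (Nat.pair n m) ∧ F.Finite ∧ A ×ˢ V ⊆ ⋃₀ F } with hVcdef
      have hVcover : ∀ m, (∀ v ∈ Vc m, IsOpen v) ∧ ⋃₀ Vc m = univ := by
        intro m
        refine ⟨fun v hv => hv.1, ?_⟩
        apply eq_univ_of_forall
        intro y
        have hKy : IsCompact (K ×ˢ ({y} : Set Y)) := hK.prod isCompact_singleton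
        obtain ⟨F, hFsub, hFfin, hcov⟩ :=
          hKy.elim_finite_subcover_image (fun i hi => (hO (Nat.pair n m)).1 i hi)
            (by rw [← sUnion_eq_biUnion, (hO (Nat.pair n m)).2]; exact subset_univ _)
      -- `hcov : K ×ˢ {y} ⊆ ⋃ i ∈ F, i`
        rw [← sUnion_eq_biUnion] at hcov
        obtain ⟨A, V, hAo, hVo, hKA, hyV, hAV⟩ :=
          generalized_tube_lemma hK isCompact_singleton
            (isOpen_sUnion fun t ht => (hO _).1 t (hFsub ht)) hcov
        exact mem_sUnion.mpr ⟨V, ⟨hVo, A, hAo, hKA, F, hFsub, hFfin, hAV⟩,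
          hyV rfl⟩
      obtain ⟨W, hWsub, hWdense⟩ := hY Vc hVcover
      have hch : ∀ m, ∀ v, v ∈ W m → ∃ A, IsOpen A ∧ K ⊆ A ∧
          ∃ F, F ⊆ O (Nat.pair n m) ∧ F.Finite ∧ A ×ˢ v ⊆ ⋃₀ F :=
        fun m v hv => ((hWsub m).1 hv).2
      choose Aw hAwo hKAw Fw hFwsub hFwfin hAwV using hch
      set Aw' : ℕ → Set Y → Set X := fun m v =>
        if hv : v ∈ W m then Aw m v hv else univ with hAw'def
      set Fw' : ℕ → Set Y → Set (Set (X × Y)) := fun m v =>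
        if hv : v ∈ W m then Fw m v hv else ∅ with hFw'def
      refine ⟨⋂ m, ⋂ v ∈ W m, Aw' m v,
        ⟨fun m => ⋃ v ∈ W m, Fw' m v, fun m => ⋃₀ W m,
          fun m => ⋂ v ∈ W m, Aw' m v, ?_, ?_, ?_, ?_, ?_, rfl⟩, ?_⟩
      · intro m
        refine iUnion₂_subset fun v hv => ?_
        simp only [hFw'def, dif_pos hv]
        exact hFwsub m v hv
      · intro m
        refine (hWsub m).2.biUnion fun v hv => ?_
        simp only [hFw'def, dif_pos hv]
        exact hFwfin m v hv
      · intro m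
        refine (hWsub m).2.isOpen_biInter fun v hv => ?_
        simp only [hAw'def, dif_pos hv]
        exact hAwo m v hv
      · intro m
        rintro ⟨x, y⟩ ⟨hx, hy⟩
        obtain ⟨v, hvW, hyv⟩ := hy
        have hxA : x ∈ Aw' m v := by
          exact mem_iInter₂.mp hx v hvW
        have : (x, y) ∈ ⋃₀ Fw' m v := by
          have hxA' : x ∈ Aw m v hvW := by
            simpa only [hAw'def, dif_pos hvW] using hxA
          simpa only [hFw'def, dif_pos hvW] using hAwV m v hvW ⟨hxA', hyv⟩
        exact sUnion_subset_sUnion (subset_biUnion_of_mem (u := Fw' m) hvW) this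
      · exact hWdense
      · intro x hx
        refine mem_iInter.mpr fun m => mem_iInter₂.mpr fun v hv => ?_
        simp only [hAw'def, dif_pos hv]
        exact hKAw m v hv hx
  obtain ⟨f, hf, hfd⟩ := h U hGK
  choose Fw Vw Aw hFsub hFfin hAopen hprodsub hdense hfeq using hf
  refine ⟨fun k => Fw (Nat.unpair k).1 (Nat.unpair k).2, ?_, ?_⟩
  · intro k
    refine ⟨?_, hFfin _ _⟩
    have := hFsub (Nat.unpair k).1 (Nat.unpair k).2
    rwa [Nat.pair_unpair] at this
  · rw [dense_iff_inter_open]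
    rintro S hS ⟨⟨x₀, y₀⟩, hz⟩
    obtain ⟨u, v, hu, hv, hx₀, hy₀, huv⟩ := isOpen_prod_iff.mp hS x₀ y₀ hz
    obtain ⟨nn, hne⟩ := (hfd u hu ⟨x₀, hx₀⟩).exists
    obtain ⟨x, hxu, hxf⟩ := hne
    obtain ⟨y, hyv, hyU⟩ := (hdense nn).inter_open_nonempty v hv ⟨y₀, hy₀⟩
    obtain ⟨m, hym⟩ := mem_iUnion.mp hyU
    have hxA : x ∈ Aw nn m := by
      have : x ∈ ⋂ m, Aw nn m := (hfeq nn) ▸ hxf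
      exact mem_iInter.mp this m
    have hxy : (x, y) ∈ ⋃₀ Fw nn m := hprodsub nn m ⟨hxA, hym⟩
    refine ⟨(x, y), huv ⟨hxu, hyv⟩, ?_⟩
    refine mem_iUnion.mpr ⟨Nat.pair nn m, ?_⟩
    simpa only [Nat.unpair_pair] using hxy
end

section
/- If X is a weakly Lindelöf P-space, then X satisfies S_1(G_K, G_D): for every sequence (U_n) of families of G-delta subsets of X such that each compact subset of X is contained in some member of each U_n, one can choose U_n in U_n such that the union of the chosen sets is dense in X. -/
open Set

def WeaklyLindelof (Z : Type*) [TopologicalSpace Z] : Prop :=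
  ∀ U : Set (Set Z), (∀ u ∈ U, IsOpen u) → ⋃₀ U = univ →
    ∃ V ⊆ U, V.Countable ∧ Dense (⋃₀ V)

/-- S₁(G_K, G_D): from each G_K-family one can choose one member so that the
union of the chosen sets is dense. -/
def S1GKGD (X : Type*) [TopologicalSpace X] : Prop :=
  ∀ U : ℕ → Set (Set X), (∀ n, GKCover X (U n)) →
    ∃ f : ℕ → Set X, (∀ n, f n ∈ U n) ∧ Dense (⋃ n, f n)

lemma gdelta_isOpen_of_P {X : Type*} [TopologicalSpace X]
    (hP : ∀ s : ℕ → Set X, (∀ n, IsOpen (s n)) → IsOpen (⋂ n, s n))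
    {s : Set X} (hs : IsGδ s) : IsOpen s := by
  obtain ⟨T, hTo, hTc, rfl⟩ := hs
  rcases T.eq_empty_or_nonempty with rfl | hne
  · simp
  · obtain ⟨e, rfl⟩ := hTc.exists_eq_range hne
    rw [sInter_range]
    exact hP e fun n => hTo _ ⟨n, rfl⟩

theorem weaklyLindelof_Pspace_S1GKGD (X : Type*) [TopologicalSpace X]
    (hwL : WeaklyLindelof X)
    (hP : ∀ s : ℕ → Set X, (∀ n, IsOpen (s n)) → IsOpen (⋂ n, s n)) :
    S1GKGD X := by
  intro U hU
  set U' : Set (Set X) := {s | ∃ g : ℕ → Set X, (∀ n, g n ∈ U n) ∧ s = ⋂ n, g n} with hU'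
  have hopen : ∀ u ∈ U', IsOpen u := by
    rintro u ⟨g, hg, rfl⟩
    exact hP g fun n => gdelta_isOpen_of_P hP ((hU n).1 _ (hg n))
  have hcover : ⋃₀ U' = univ := by
    apply eq_univ_of_forall
    intro x
    choose g hg1 hg2 using fun n => (hU n).2 {x} isCompact_singleton
    exact ⟨⋂ n, g n, ⟨g, hg1, rfl⟩, mem_iInter.2 fun n => hg2 n rfl⟩
  obtain ⟨V, hVU, hVc, hVd⟩ := hwL U' hopen hcover
  rcases V.eq_empty_or_nonempty with rfl | hVne
  · -- X must be empty
    choose f hf1 _ using fun n => (hU n).2 ∅ isCompact_empty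
    refine ⟨f, hf1, ?_⟩
    intro x
    simpa using hVd x
  · obtain ⟨e, rfl⟩ := hVc.exists_eq_range hVne
    have : ∀ k, e k ∈ U' := fun k => hVU ⟨k, rfl⟩
    choose g hg1 hg2 using this
    refine ⟨fun n => g n n, fun n => hg1 n n, ?_⟩
    refine hVd.mono ?_
    rw [sUnion_range]
    refine iUnion_mono fun k => ?_
    rw [hg2 k]
    exact iInter_subset _ k
end
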